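/- arXiv:1403.7271 — 2 statements merged into one kernel-verified Lean document; each statement's English description precedes it below -/
import Mathlib

section
/- For 0 < ν < 1/2, the function τ ↦ e^τ τ^ν K_ν(τ) is strictly decreasing on (0, ∞), where K_ν is the modified Bessel function of the third kind of order ν. -/
open Real MeasureTheory Set Filter Topology

/-- Modified Bessel function of the second kind (Macdonald function) of order `ν`,
via its standard integral representation `K_ν(τ) = ∫_0^∞ e^{-τ cosh t} cosh(ν t) dt`. -/
noncomputable def besselK (ν τ : ℝ) : ℝ :=
  ∫ t in Set.Ioi (0 : ℝ), Real.exp (-τ * Real.cosh t) * Real.cosh (ν * t)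

/- auxiliary hyperbolic identities -/
private lemma coshIdent (ν t : ℝ) :
    Real.cosh ((1 + ν) * t) + Real.cosh ((1 - ν) * t)
      = 2 * (Real.cosh t * Real.cosh (ν * t)) := by
  rw [show (1 + ν) * t = t + ν * t by ring, show (1 - ν) * t = t - ν * t by ring,
    Real.cosh_add, Real.cosh_sub]
  ring

private lemma coshIdent2 (ν t : ℝ) :
    Real.cosh ((1 + ν) * t) - Real.cosh ((1 - ν) * t)
      = 2 * (Real.sinh t * Real.sinh (ν * t)) := by
  rw [show (1 + ν) * t = t + ν * t by ring, show (1 - ν) * t = t - ν * t by ring,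
    Real.cosh_add, Real.cosh_sub]
  ring

private lemma half_exp_le_cosh (t : ℝ) : Real.exp t / 2 ≤ Real.cosh t := by
  rw [Real.cosh_eq]
  have := (Real.exp_pos (-t)).le
  linarith

private lemma cosh_le_exp_abs (x : ℝ) : Real.cosh x ≤ Real.exp |x| := by
  rw [Real.cosh_eq]
  have h1 : Real.exp x ≤ Real.exp |x| := Real.exp_le_exp.2 (le_abs_self x)
  have h2 : Real.exp (-x) ≤ Real.exp |x| := Real.exp_le_exp.2 (neg_le_abs x)
  linarith

private lemma abs_sinh_le_cosh (x : ℝ) : |Real.sinh x| ≤ Real.cosh x := by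
  rw [abs_le, Real.sinh_eq, Real.cosh_eq]
  have := (Real.exp_pos x).le
  have := (Real.exp_pos (-x)).le
  constructor <;> nlinarith

/-- `c*t - τ cosh t → -∞`. -/
private lemma tendAux {τ : ℝ} (hτ : 0 < τ) (c : ℝ) :
    Tendsto (fun t : ℝ => c * t - τ * Real.cosh t) atTop atBot := by
  have hlo : (fun t : ℝ => c * t) =o[atTop] Real.exp := by
    simpa using (Real.isLittleO_pow_exp_atTop (n := 1)).const_mul_left c
  have hbd := hlo.bound (show (0:ℝ) < τ / 4 by linarith)
  have hlim : Tendsto (fun t : ℝ => -(τ / 4 * Real.exp t)) atTop atBot := by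
    exact (tendsto_neg_atTop_atBot).comp
      (Real.tendsto_exp_atTop.const_mul_atTop (by linarith))
  refine tendsto_atBot_mono' _ ?_ hlim
  filter_upwards [hbd] with t ht
  have h2 : τ / 2 * Real.exp t ≤ τ * Real.cosh t := by
    have := half_exp_le_cosh t
    nlinarith
  have h3 : c * t ≤ τ / 4 * Real.exp t := by
    have := le_abs_self (c * t)
    simp only [Real.norm_eq_abs] at ht
    have : |c * t| ≤ τ / 4 * Real.exp t := by
      have he : |Real.exp t| = Real.exp t := abs_of_pos (Real.exp_pos t)
      calc |c * t| ≤ τ / 4 * |Real.exp t| := ht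
        _ = τ / 4 * Real.exp t := by rw [he]
    linarith [le_abs_self (c * t)]
  linarith

/-- integrability of the basic integrand -/
private lemma intK {τ : ℝ} (hτ : 0 < τ) (μ : ℝ) :
    IntegrableOn (fun t => Real.exp (-τ * Real.cosh t) * Real.cosh (μ * t))
      (Set.Ioi (0:ℝ)) := by
  apply integrable_of_isBigO_exp_neg (b := 1) one_pos
  · fun_prop
  · apply Asymptotics.IsBigO.of_bound 1
    have hev := (tendAux hτ (|μ| + 1)).eventually_le_atBot 0
    filter_upwards [hev, eventually_ge_atTop (0:ℝ)] with t ht ht0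
    have hc : Real.cosh (μ * t) ≤ Real.exp (|μ| * t) := by
      calc Real.cosh (μ * t) ≤ Real.exp |μ * t| := cosh_le_exp_abs _
        _ = Real.exp (|μ| * t) := by rw [abs_mul, abs_of_nonneg ht0]
    have key : Real.exp (-τ * Real.cosh t) * Real.cosh (μ * t) ≤ Real.exp (-1 * t) := by
      calc Real.exp (-τ * Real.cosh t) * Real.cosh (μ * t)
          ≤ Real.exp (-τ * Real.cosh t) * Real.exp (|μ| * t) := by
            exact mul_le_mul_of_nonneg_left hc (Real.exp_pos _).le
        _ = Real.exp (|μ| * t - τ * Real.cosh t) := by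
            rw [← Real.exp_add]; ring_nf
        _ ≤ Real.exp (-1 * t) := by
            apply Real.exp_le_exp.2
            nlinarith
    have hpos : 0 < Real.exp (-τ * Real.cosh t) * Real.cosh (μ * t) :=
      mul_pos (Real.exp_pos _) (Real.cosh_pos _)
    rw [Real.norm_eq_abs, Real.norm_eq_abs, abs_of_pos hpos,
      abs_of_pos (Real.exp_pos _), one_mul]
    exact key

/-- derivative of `besselK ν` in `τ`. -/
private lemma hasDerivK {ν τ : ℝ} (hτ : 0 < τ) :
    HasDerivAt (besselK ν)
      (-((besselK (1 + ν) τ + besselK (1 - ν) τ) / 2)) τ := by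
  have hmain := hasDerivAt_integral_of_dominated_loc_of_deriv_le
    (μ := volume.restrict (Set.Ioi (0:ℝ)))
    (F := fun x t => Real.exp (-x * Real.cosh t) * Real.cosh (ν * t))
    (F' := fun x t => -(Real.cosh t * (Real.exp (-x * Real.cosh t) * Real.cosh (ν * t))))
    (x₀ := τ) (s := Metric.ball τ (τ / 2))
    (bound := fun t => (Real.exp (-(τ/2) * Real.cosh t) * Real.cosh ((1 + ν) * t)
      + Real.exp (-(τ/2) * Real.cosh t) * Real.cosh ((1 - ν) * t)) / 2)
    (Metric.ball_mem_nhds τ (by linarith))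
    (Eventually.of_forall fun x => (by fun_prop : Continuous fun t : ℝ =>
        Real.exp (-x * Real.cosh t) * Real.cosh (ν * t)).aestronglyMeasurable)
    (intK hτ ν)
    ((by fun_prop : Continuous fun t : ℝ =>
        -(Real.cosh t * (Real.exp (-τ * Real.cosh t) * Real.cosh (ν * t)))).aestronglyMeasurable)
    (Eventually.of_forall fun t => by
      intro x hx
      have hx2 : τ / 2 ≤ x := by
        rw [Metric.mem_ball, Real.dist_eq] at hx
        cases abs_lt.1 hx; linarith
      have h1 : ‖-(Real.cosh t * (Real.exp (-x * Real.cosh t) * Real.cosh (ν * t)))‖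
          = Real.cosh t * (Real.exp (-x * Real.cosh t) * Real.cosh (ν * t)) := by
        rw [norm_neg, Real.norm_eq_abs, abs_of_pos]
        positivity
      rw [h1]
      have h2 : (Real.exp (-(τ/2) * Real.cosh t) * Real.cosh ((1 + ν) * t)
          + Real.exp (-(τ/2) * Real.cosh t) * Real.cosh ((1 - ν) * t)) / 2
          = Real.cosh t * (Real.exp (-(τ/2) * Real.cosh t) * Real.cosh (ν * t)) := by
        linear_combination (Real.exp (-(τ/2) * Real.cosh t) / 2) * (coshIdent ν t)
      show Real.cosh t * (Real.exp (-x * Real.cosh t) * Real.cosh (ν * t))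
          ≤ (Real.exp (-(τ/2) * Real.cosh t) * Real.cosh ((1 + ν) * t)
            + Real.exp (-(τ/2) * Real.cosh t) * Real.cosh ((1 - ν) * t)) / 2
      rw [h2]
      have h3 : Real.exp (-x * Real.cosh t) ≤ Real.exp (-(τ/2) * Real.cosh t) := by
        apply Real.exp_le_exp.2
        nlinarith [Real.cosh_pos t]
      gcongr)
    (by
      have : Integrable (fun t => (Real.exp (-(τ/2) * Real.cosh t) * Real.cosh ((1 + ν) * t)
          + Real.exp (-(τ/2) * Real.cosh t) * Real.cosh ((1 - ν) * t)) / 2)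
          (volume.restrict (Set.Ioi (0:ℝ))) := by
        exact ((intK (by linarith : (0:ℝ) < τ/2) (1 + ν)).add
          (intK (by linarith : (0:ℝ) < τ/2) (1 - ν))).div_const 2
      exact this)
    (Eventually.of_forall fun t => by
      intro x hx
      have h := (((hasDerivAt_id x).neg.mul_const (Real.cosh t)).exp.mul_const
        (Real.cosh (ν * t)))
      refine h.congr_deriv ?_
      simp only [Pi.neg_apply, id_eq]
      ring)
  obtain ⟨-, h⟩ := hmain
  have hval : (∫ t in Set.Ioi (0:ℝ),
      -(Real.cosh t * (Real.exp (-τ * Real.cosh t) * Real.cosh (ν * t))))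
      = -((besselK (1 + ν) τ + besselK (1 - ν) τ) / 2) := by
    have hfun : (fun t => -(Real.cosh t * (Real.exp (-τ * Real.cosh t) * Real.cosh (ν * t))))
        = fun t => -((Real.exp (-τ * Real.cosh t) * Real.cosh ((1 + ν) * t)
            + Real.exp (-τ * Real.cosh t) * Real.cosh ((1 - ν) * t)) / 2) := by
      funext t
      linear_combination (Real.exp (-τ * Real.cosh t) / 2) * (coshIdent ν t)
    rw [hfun, integral_neg, integral_div, integral_add (intK hτ (1 + ν)) (intK hτ (1 - ν))]
    rfl
  rw [← hval]
  exact h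

/-- the recurrence `ν K_ν = τ (K_{1+ν} - K_{1-ν})/2`, by integration by parts. -/
private lemma recurrence {ν τ : ℝ} (hν : 0 ≤ ν) (hτ : 0 < τ) :
    ν * besselK ν τ = τ * ((besselK (1 + ν) τ - besselK (1 - ν) τ) / 2) := by
  set g : ℝ → ℝ := fun t => Real.exp (-τ * Real.cosh t) * Real.sinh (ν * t) with hg
  set g' : ℝ → ℝ := fun t => ν * (Real.exp (-τ * Real.cosh t) * Real.cosh (ν * t))
      - τ / 2 * (Real.exp (-τ * Real.cosh t) * Real.cosh ((1 + ν) * t)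
        - Real.exp (-τ * Real.cosh t) * Real.cosh ((1 - ν) * t)) with hg'
  have hderiv : ∀ t : ℝ, HasDerivAt g (g' t) t := by
    intro t
    have h1 : HasDerivAt (fun t => Real.exp (-τ * Real.cosh t))
        (Real.exp (-τ * Real.cosh t) * (-τ * Real.sinh t)) t :=
      ((Real.hasDerivAt_cosh t).const_mul (-τ)).exp
    have h2 : HasDerivAt (fun t => Real.sinh (ν * t)) (Real.cosh (ν * t) * ν) t := by
      simpa using ((hasDerivAt_id t).const_mul ν).sinh
    have h := h1.mul h2
    refine h.congr_deriv ?_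
    symm
    simp only [hg']
    linear_combination (-(τ * Real.exp (-τ * Real.cosh t)) / 2) * (coshIdent2 ν t)
  have hint : IntegrableOn g' (Set.Ioi (0:ℝ)) := by
    apply Integrable.sub
    · exact (intK hτ ν).const_mul ν
    · exact ((intK hτ (1 + ν)).sub (intK hτ (1 - ν))).const_mul (τ / 2)
  have htend : Tendsto g atTop (𝓝 0) := by
    have hb : ∀ᶠ t in atTop, ‖g t‖ ≤ Real.exp (ν * t - τ * Real.cosh t) := by
      filter_upwards [eventually_ge_atTop (0:ℝ)] with t ht0
      have h1 : ‖g t‖ = Real.exp (-τ * Real.cosh t) * |Real.sinh (ν * t)| := by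
        rw [Real.norm_eq_abs, abs_mul, abs_of_pos (Real.exp_pos _)]
      rw [h1]
      calc Real.exp (-τ * Real.cosh t) * |Real.sinh (ν * t)|
          ≤ Real.exp (-τ * Real.cosh t) * Real.exp (ν * t) := by
            apply mul_le_mul_of_nonneg_left _ (Real.exp_pos _).le
            calc |Real.sinh (ν * t)| ≤ Real.cosh (ν * t) := abs_sinh_le_cosh _
              _ ≤ Real.exp |ν * t| := cosh_le_exp_abs _
              _ = Real.exp (ν * t) := by
                  rw [abs_of_nonneg (mul_nonneg hν ht0)]
        _ = Real.exp (ν * t - τ * Real.cosh t) := by rw [← Real.exp_add]; ring_nf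
    exact squeeze_zero_norm' hb (Real.tendsto_exp_atBot.comp (tendAux hτ ν))
  have h0 : (∫ t in Set.Ioi (0:ℝ), g' t) = 0 - g 0 := by
    apply integral_Ioi_of_hasDerivAt_of_tendsto
    · exact (hderiv 0).continuousAt.continuousWithinAt
    · exact fun x _ => hderiv x
    · exact hint
    · exact htend
  have hg0 : g 0 = 0 := by simp [hg]
  rw [hg0, sub_zero] at h0
  have hsplit : (∫ t in Set.Ioi (0:ℝ), g' t)
      = ν * besselK ν τ - τ * ((besselK (1 + ν) τ - besselK (1 - ν) τ) / 2) := by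
    simp only [hg']
    have hi1 : IntegrableOn (fun t => ν * (Real.exp (-τ * Real.cosh t) * Real.cosh (ν * t)))
        (Set.Ioi (0:ℝ)) := (intK hτ ν).const_mul ν
    have hi2 : IntegrableOn (fun t => τ / 2 * (Real.exp (-τ * Real.cosh t)
          * Real.cosh ((1 + ν) * t)
        - Real.exp (-τ * Real.cosh t) * Real.cosh ((1 - ν) * t))) (Set.Ioi (0:ℝ)) := by
      simpa [Pi.sub_apply, IntegrableOn] using
        ((intK hτ (1 + ν)).sub (intK hτ (1 - ν))).const_mul (τ / 2)
    rw [integral_sub hi1 hi2, integral_const_mul, integral_const_mul,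
      integral_sub (intK hτ (1 + ν)) (intK hτ (1 - ν))]
    show ν * besselK ν τ - τ / 2 * (besselK (1 + ν) τ - besselK (1 - ν) τ) = _
    ring
  rw [hsplit] at h0
  linarith

/-- strict monotonicity in the order: `K_ν < K_{1-ν}` for `0 < ν < 1/2`. -/
private lemma orderLt {ν τ : ℝ} (hν0 : 0 < ν) (hν : ν < 1/2) (hτ : 0 < τ) :
    besselK ν τ < besselK (1 - ν) τ := by
  have hd : (0:ℝ) < ∫ t in Set.Ioi (0:ℝ),
      (Real.exp (-τ * Real.cosh t) * Real.cosh ((1 - ν) * t)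
        - Real.exp (-τ * Real.cosh t) * Real.cosh (ν * t)) := by
    set d : ℝ → ℝ := fun t => Real.exp (-τ * Real.cosh t) * Real.cosh ((1 - ν) * t)
        - Real.exp (-τ * Real.cosh t) * Real.cosh (ν * t) with hd'
    have hdpos : ∀ t ∈ Set.Ioi (0:ℝ), 0 < d t := by
      intro t ht
      simp only [Set.mem_Ioi] at ht
      have hlt : Real.cosh (ν * t) < Real.cosh ((1 - ν) * t) := by
        rw [Real.cosh_lt_cosh]
        rw [abs_of_pos (by nlinarith), abs_of_pos (by nlinarith)]
        nlinarith
      have := Real.exp_pos (-τ * Real.cosh t)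
      simp only [hd']
      nlinarith
    have hint : IntegrableOn d (Set.Ioi (0:ℝ)) := (intK hτ (1 - ν)).sub (intK hτ ν)
    rw [setIntegral_pos_iff_support_of_nonneg_ae _ hint]
    · apply lt_of_lt_of_le _ (measure_mono (show Set.Ioi (0:ℝ) ⊆ Function.support d ∩ Set.Ioi 0
        from fun t ht => ⟨(hdpos t ht).ne', ht⟩))
      rw [Real.volume_Ioi]
      exact ENNReal.zero_lt_top
    · rw [EventuallyLE, ae_restrict_iff' measurableSet_Ioi]
      exact Eventually.of_forall fun t ht => (hdpos t ht).le
  have := integral_sub (intK hτ (1 - ν)) (intK hτ ν)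
  rw [this] at hd
  have : besselK (1 - ν) τ - besselK ν τ > 0 := hd
  linarith

private lemma hasDerivF {ν τ : ℝ} (hν0 : 0 < ν) (hτ : 0 < τ) :
    HasDerivAt (fun τ : ℝ => Real.exp τ * τ ^ ν * besselK ν τ)
      (Real.exp τ * τ ^ ν * (besselK ν τ - besselK (1 - ν) τ)) τ := by
  have hexp : HasDerivAt Real.exp (Real.exp τ) τ := Real.hasDerivAt_exp τ
  have hpow : HasDerivAt (fun x : ℝ => x ^ ν) (ν * τ ^ (ν - 1)) τ :=
    Real.hasDerivAt_rpow_const (Or.inl hτ.ne')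
  have hK := hasDerivK (ν := ν) hτ
  have h := (hexp.mul hpow).mul hK
  refine h.congr_deriv ?_
  symm
  simp only [Pi.mul_apply]
  have hrec := recurrence hν0.le hτ
  have hmul : τ ^ (ν - 1) * τ = τ ^ ν := by
    calc τ ^ (ν - 1) * τ = τ ^ (ν - 1) * τ ^ (1:ℝ) := by rw [Real.rpow_one]
      _ = τ ^ (ν - 1 + 1) := (Real.rpow_add hτ _ _).symm
      _ = τ ^ ν := by norm_num
  set K := besselK ν τ
  set Kp := besselK (1 + ν) τ
  set Km := besselK (1 - ν) τ
  have key : ν * τ ^ (ν - 1) * K = τ ^ ν * ((Kp - Km) / 2) := by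
    calc ν * τ ^ (ν - 1) * K = τ ^ (ν - 1) * (ν * K) := by ring
      _ = τ ^ (ν - 1) * (τ * ((Kp - Km) / 2)) := by rw [hrec]
      _ = (τ ^ (ν - 1) * τ) * ((Kp - Km) / 2) := by ring
      _ = τ ^ ν * ((Kp - Km) / 2) := by rw [hmul]
  linear_combination (-(Real.exp τ)) * key

/-- For `0 < ν < 1/2`, the function `τ ↦ e^τ τ^ν K_ν(τ)` is strictly decreasing on `(0, ∞)`. -/
theorem besselK_strictAntiOn (ν : ℝ) (hν0 : 0 < ν) (hν : ν < 1 / 2) :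
    StrictAntiOn (fun τ : ℝ => Real.exp τ * τ ^ ν * besselK ν τ) (Set.Ioi 0) := by
  apply strictAntiOn_of_deriv_neg (convex_Ioi 0)
  · intro x hx
    exact (hasDerivF hν0 hx).continuousAt.continuousWithinAt
  · intro x hx
    rw [interior_Ioi] at hx
    rw [(hasDerivF hν0 hx).deriv]
    have h1 : (0:ℝ) < Real.exp x * x ^ ν :=
      mul_pos (Real.exp_pos x) (Real.rpow_pos_of_pos hx ν)
    have h2 : besselK ν x - besselK (1 - ν) x < 0 := by
      have := orderLt hν0 hν hx
      linarith
    exact mul_neg_of_pos_of_neg h1 h2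
end

section
/- For 0 < ν < 1/2 and all τ > 0, one has e^τ τ^ν K_ν(τ) ≤ 2^{ν-1} Γ(ν), where K_ν is the modified Bessel function of the second kind. -/
open Real MeasureTheory Set

namespace BesselKAux

/-! ### Substitution `y = c * exp t` mapping `ℝ` onto `Ioi 0` -/

lemma image_exp_scale {c : ℝ} (hc : 0 < c) :
    (fun t : ℝ => c * Real.exp t) '' univ = Ioi 0 := by
  rw [image_univ]
  ext y
  simp only [mem_range, mem_Ioi]
  constructor
  · rintro ⟨t, rfl⟩; positivity
  · intro hy
    refine ⟨Real.log (y / c), ?_⟩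
    rw [Real.exp_log (by positivity)]
    field_simp

lemma integral_exp_scale {c : ℝ} (hc : 0 < c) (g : ℝ → ℝ) :
    ∫ y in Ioi (0:ℝ), g y = ∫ t : ℝ, (c * Real.exp t) * g (c * Real.exp t) := by
  have hderiv : ∀ t ∈ (univ : Set ℝ), HasDerivWithinAt (fun t : ℝ => c * Real.exp t)
      (c * Real.exp t) univ t := fun t _ =>
    ((Real.hasDerivAt_exp t).const_mul c).hasDerivWithinAt
  have hinj : InjOn (fun t : ℝ => c * Real.exp t) univ := by
    intro a _ b _ h
    have h' : Real.exp a = Real.exp b := mul_left_cancel₀ (ne_of_gt hc) h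
    exact Real.exp_eq_exp.mp h'
  have h := integral_image_eq_integral_abs_deriv_smul MeasurableSet.univ hderiv hinj g
  rw [image_exp_scale hc, Measure.restrict_univ] at h
  rw [h]
  congr 1
  funext t
  rw [abs_of_pos (by positivity), smul_eq_mul]

lemma integrable_exp_scale_iff {c : ℝ} (hc : 0 < c) (g : ℝ → ℝ) :
    IntegrableOn g (Ioi (0:ℝ)) ↔
      Integrable (fun t : ℝ => (c * Real.exp t) * g (c * Real.exp t)) := by
  have hderiv : ∀ t ∈ (univ : Set ℝ), HasDerivWithinAt (fun t : ℝ => c * Real.exp t)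
      (c * Real.exp t) univ t := fun t _ =>
    ((Real.hasDerivAt_exp t).const_mul c).hasDerivWithinAt
  have hinj : InjOn (fun t : ℝ => c * Real.exp t) univ := by
    intro a _ b _ h
    have h' : Real.exp a = Real.exp b := mul_left_cancel₀ (ne_of_gt hc) h
    exact Real.exp_eq_exp.mp h'
  have h := integrableOn_image_iff_integrableOn_abs_deriv_smul MeasurableSet.univ hderiv hinj g
  rw [image_exp_scale hc] at h
  have hfun : (fun t : ℝ => |c * Real.exp t| • g (c * Real.exp t)) =
      fun t : ℝ => (c * Real.exp t) * g (c * Real.exp t) := by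
    funext t
    rw [abs_of_pos (by positivity), smul_eq_mul]
  rw [hfun] at h
  rw [h, integrableOn_univ]

/-! ### Substitution `y = u ^ 2` mapping `Ioi 0` onto itself -/

lemma sq_deriv : ∀ u ∈ Ioi (0:ℝ), HasDerivWithinAt (fun u : ℝ => u ^ 2) (2 * u) (Ioi 0) u :=
  fun u _ => by simpa using (hasDerivAt_pow 2 u).hasDerivWithinAt

lemma sq_image : (fun u : ℝ => u ^ 2) '' Ioi 0 = Ioi 0 := by
  ext y
  simp only [mem_image, mem_Ioi]
  constructor
  · rintro ⟨u, hu, rfl⟩; positivity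
  · intro hy; exact ⟨Real.sqrt y, Real.sqrt_pos.mpr hy, Real.sq_sqrt hy.le⟩

lemma sq_injOn : InjOn (fun u : ℝ => u ^ 2) (Ioi 0) := by
  intro a ha b hb h
  simp only at h
  have ha' : (0:ℝ) < a := ha
  have hb' : (0:ℝ) < b := hb
  rw [← Real.sqrt_sq ha'.le, ← Real.sqrt_sq hb'.le, h]

lemma integral_sq_subst (g : ℝ → ℝ) :
    ∫ y in Ioi (0:ℝ), g y = ∫ u in Ioi (0:ℝ), (2 * u) * g (u ^ 2) := by
  have h := integral_image_eq_integral_abs_deriv_smul measurableSet_Ioi sq_deriv sq_injOn g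
  rw [sq_image] at h
  rw [h]
  refine setIntegral_congr_fun measurableSet_Ioi fun u hu => ?_
  have hu' : (0:ℝ) < u := hu
  rw [abs_of_pos (by positivity), smul_eq_mul]

/-! ### Glasser-type computation: `∫_{u>0} exp(-(u - c/u)^2) du = √π / 2` -/

lemma inv_deriv {c : ℝ} (hc : 0 < c) :
    ∀ u ∈ Ioi (0:ℝ), HasDerivWithinAt (fun u : ℝ => c / u) (-(c / u ^ 2)) (Ioi 0) u := by
  intro u hu
  have hu' : (0:ℝ) < u := hu
  have h := (hasDerivAt_inv (ne_of_gt hu')).const_mul c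
  have : HasDerivAt (fun u : ℝ => c / u) (c * -(u ^ 2)⁻¹) u := by
    simpa [div_eq_mul_inv] using h
  simpa [div_eq_mul_inv, mul_neg] using this.hasDerivWithinAt

lemma inv_image {c : ℝ} (hc : 0 < c) : (fun u : ℝ => c / u) '' Ioi 0 = Ioi 0 := by
  ext y
  simp only [mem_image, mem_Ioi]
  constructor
  · rintro ⟨u, hu, rfl⟩; positivity
  · intro hy
    refine ⟨c / y, by positivity, ?_⟩
    field_simp

lemma inv_injOn {c : ℝ} (hc : 0 < c) : InjOn (fun u : ℝ => c / u) (Ioi 0) := by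
  intro a ha b hb h
  simp only at h
  have ha' : (0:ℝ) < a := ha
  have hb' : (0:ℝ) < b := hb
  field_simp at h
  rcases h with h | h <;> first | exact h.symm | exact h | linarith

lemma glasser_integrable {c : ℝ} (hc : 0 < c) :
    IntegrableOn (fun u : ℝ => Real.exp (-(u - c / u) ^ 2)) (Ioi 0) := by
  refine Integrable.mono'
    (((integrable_exp_neg_mul_sq one_pos).const_mul (Real.exp (2 * c))).integrableOn)
    (Measurable.aestronglyMeasurable
      (Real.measurable_exp.comp
        (((measurable_id.sub (measurable_const.div measurable_id)).pow_const 2).neg))) ?_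
  refine (ae_restrict_iff' measurableSet_Ioi).mpr (ae_of_all _ fun u hu => ?_)
  have hu' : (0:ℝ) < u := hu
  have hcu : u * (c / u) = c := by field_simp
  rw [Real.norm_eq_abs, abs_of_pos (Real.exp_pos _), ← Real.exp_add]
  apply Real.exp_le_exp.mpr
  nlinarith [sq_nonneg (c / u)]

lemma glasser_inv_integrable {c : ℝ} (hc : 0 < c) :
    IntegrableOn (fun u : ℝ => (c / u ^ 2) * Real.exp (-(u - c / u) ^ 2)) (Ioi 0) := by
  have h := (integrableOn_image_iff_integrableOn_abs_deriv_smul measurableSet_Ioi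
    (inv_deriv hc) (inv_injOn hc) (fun u : ℝ => Real.exp (-(u - c / u) ^ 2)))
  rw [inv_image hc] at h
  have h2 := h.mp (glasser_integrable hc)
  refine IntegrableOn.congr_fun h2 (fun u hu => ?_) measurableSet_Ioi
  have hu' : (0:ℝ) < u := hu
  have h1 : c / (c / u) = u := by field_simp
  rw [smul_eq_mul, abs_neg, abs_of_pos (by positivity), h1]
  congr 2
  ring

lemma glasser_inv_eq {c : ℝ} (hc : 0 < c) :
    ∫ u in Ioi (0:ℝ), (c / u ^ 2) * Real.exp (-(u - c / u) ^ 2)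
      = ∫ u in Ioi (0:ℝ), Real.exp (-(u - c / u) ^ 2) := by
  have h := integral_image_eq_integral_abs_deriv_smul measurableSet_Ioi
    (inv_deriv hc) (inv_injOn hc) (fun u : ℝ => Real.exp (-(u - c / u) ^ 2))
  rw [inv_image hc] at h
  rw [h]
  refine setIntegral_congr_fun measurableSet_Ioi fun u hu => ?_
  have hu' : (0:ℝ) < u := hu
  have h1 : c / (c / u) = u := by field_simp
  rw [smul_eq_mul, abs_neg, abs_of_pos (by positivity), h1]
  congr 2
  ring

lemma sub_inv_deriv {c : ℝ} (hc : 0 < c) :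
    ∀ u ∈ Ioi (0:ℝ), HasDerivWithinAt (fun u : ℝ => u - c / u) (1 + c / u ^ 2) (Ioi 0) u := by
  intro u hu
  have hu' : (0:ℝ) < u := hu
  have h := (hasDerivAt_id u).sub ((inv_deriv hc u hu).hasDerivAt (Ioi_mem_nhds hu'))
  simpa [sub_neg_eq_add, Pi.sub_def] using h.hasDerivWithinAt

lemma sub_inv_image {c : ℝ} (hc : 0 < c) : (fun u : ℝ => u - c / u) '' Ioi 0 = univ := by
  ext v
  simp only [mem_image, mem_Ioi, mem_univ, iff_true]
  have hs : Real.sqrt (v ^ 2 + 4 * c) > -v := by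
    rcases le_or_gt v 0 with h | h
    · have h1 : v ^ 2 ≤ v ^ 2 + 4 * c := by linarith
      have : -v = Real.sqrt (v ^ 2) := by
        rw [Real.sqrt_sq_eq_abs, abs_of_nonpos h]
      rw [this]
      exact Real.sqrt_lt_sqrt (sq_nonneg v) (by linarith)
    · calc -v < 0 := by linarith
        _ ≤ _ := Real.sqrt_nonneg _
  set s := Real.sqrt (v ^ 2 + 4 * c) with hsdef
  have hs2 : s ^ 2 = v ^ 2 + 4 * c := Real.sq_sqrt (by nlinarith [sq_nonneg v])
  refine ⟨(v + s) / 2, by linarith, ?_⟩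
  have hu : (0:ℝ) < (v + s) / 2 := by linarith
  have hne : v + s ≠ 0 := ne_of_gt (by linarith)
  field_simp
  linear_combination hs2

lemma sub_inv_injOn {c : ℝ} (hc : 0 < c) : InjOn (fun u : ℝ => u - c / u) (Ioi 0) := by
  have hmono : StrictMonoOn (fun u : ℝ => u - c / u) (Ioi 0) := by
    intro a ha b hb hab
    have ha' : (0:ℝ) < a := ha
    have hb' : (0:ℝ) < b := hb
    have : c / b < c / a := div_lt_div_of_pos_left hc ha' hab
    simp only
    linarith
  exact hmono.injOn

lemma glasser {c : ℝ} (hc : 0 < c) :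
    ∫ u in Ioi (0:ℝ), Real.exp (-(u - c / u) ^ 2) = Real.sqrt π / 2 := by
  have hgauss : ∫ v : ℝ, Real.exp (-v ^ 2) = Real.sqrt π := by
    simpa using integral_gaussian 1
  have h := integral_image_eq_integral_abs_deriv_smul measurableSet_Ioi
    (sub_inv_deriv hc) (sub_inv_injOn hc) (fun v : ℝ => Real.exp (-v ^ 2))
  rw [sub_inv_image hc, Measure.restrict_univ] at h
  rw [hgauss] at h
  have hcong : ∫ u in Ioi (0:ℝ), |1 + c / u ^ 2| • Real.exp (-(u - c / u) ^ 2)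
      = (∫ u in Ioi (0:ℝ), Real.exp (-(u - c / u) ^ 2))
        + ∫ u in Ioi (0:ℝ), (c / u ^ 2) * Real.exp (-(u - c / u) ^ 2) := by
    rw [← integral_add (glasser_integrable hc) (glasser_inv_integrable hc)]
    refine setIntegral_congr_fun measurableSet_Ioi fun u hu => ?_
    have hu' : (0:ℝ) < u := hu
    rw [smul_eq_mul, abs_of_pos (by positivity)]
    ring
  rw [hcong, glasser_inv_eq hc] at h
  linarith

/-! ### `∫_{y>0} exp(-(y + τ²/4y)) y^(-1/2) dy = √π exp(-τ)` -/

lemma half_integral {τ : ℝ} (hτ : 0 < τ) :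
    ∫ y in Ioi (0:ℝ), Real.exp (-(y + τ ^ 2 / (4 * y))) * y ^ (-(1:ℝ)/2)
      = Real.sqrt π * Real.exp (-τ) := by
  rw [integral_sq_subst (fun y => Real.exp (-(y + τ ^ 2 / (4 * y))) * y ^ (-(1:ℝ)/2))]
  have hcong : ∀ u ∈ Ioi (0:ℝ),
      (2 * u) * (Real.exp (-(u ^ 2 + τ ^ 2 / (4 * u ^ 2))) * ((u ^ 2 : ℝ)) ^ (-(1:ℝ)/2))
        = (2 * Real.exp (-τ)) * Real.exp (-(u - (τ/2) / u) ^ 2) := by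
    intro u hu
    have hu' : (0:ℝ) < u := hu
    have h1 : ((u ^ 2 : ℝ)) ^ (-(1:ℝ)/2) = u⁻¹ := by
      rw [← Real.rpow_natCast u 2, ← Real.rpow_mul hu'.le]
      norm_num [Real.rpow_neg_one]
    have h2 : u ^ 2 + τ ^ 2 / (4 * u ^ 2) = (u - (τ/2) / u) ^ 2 + τ := by
      field_simp
      ring
    rw [h1, h2, neg_add, Real.exp_add]
    field_simp
  rw [setIntegral_congr_fun measurableSet_Ioi hcong, MeasureTheory.integral_const_mul,
    glasser (by positivity : (0:ℝ) < τ/2)]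
  rw [mul_comm]
  ring

/-! ### Integrability of the `ψ` integrands -/

lemma integrable_psi {τ s : ℝ} (hτ : 0 < τ) (hs : 0 < s) :
    IntegrableOn (fun y : ℝ => Real.exp (-(y + τ ^ 2 / (4 * y))) * y ^ (s - 1)) (Ioi (0:ℝ)) := by
  have hcont : ContinuousOn (fun y : ℝ => Real.exp (-(y + τ ^ 2 / (4 * y))) * y ^ (s - 1))
      (Ioi (0:ℝ)) := by
    apply ContinuousOn.mul
    · refine Real.continuous_exp.comp_continuousOn ?_
      refine (continuousOn_id.add (continuousOn_const.div ?_ ?_)).neg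
      · exact (continuous_const.mul continuous_id).continuousOn
      · intro y hy
        have : (0:ℝ) < y := hy
        positivity
    · exact continuousOn_id.rpow_const fun y hy => Or.inl (ne_of_gt hy)
  refine Integrable.mono' (Real.GammaIntegral_convergent hs)
    (hcont.aestronglyMeasurable measurableSet_Ioi) ?_

  · refine (ae_restrict_iff' measurableSet_Ioi).mpr (ae_of_all _ fun y hy => ?_)
    have hy' : (0:ℝ) < y := hy
    rw [Real.norm_eq_abs, abs_of_nonneg (by positivity)]
    have h1 : Real.exp (-(y + τ ^ 2 / (4 * y))) ≤ Real.exp (-y) := by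
      apply Real.exp_le_exp.mpr
      have : 0 ≤ τ ^ 2 / (4 * y) := by positivity
      linarith
    exact mul_le_mul_of_nonneg_right h1 (Real.rpow_nonneg hy'.le _)

/-! ### Representation of the Bessel integral -/

lemma besselK_rep {ν τ : ℝ} (hν0 : 0 < ν) (hτ : 0 < τ) :
    (∫ t in Ioi (0:ℝ), Real.exp (-τ * Real.cosh t) * Real.cosh (ν * t))
      = (2:ℝ) ^ (ν - 1) * τ ^ (-ν) *
        ∫ y in Ioi (0:ℝ), Real.exp (-(y + τ ^ 2 / (4 * y))) * y ^ (ν - 1) := by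
  have hc2 : (0:ℝ) < τ / 2 := by positivity
  set g : ℝ → ℝ := fun y => Real.exp (-(y + τ ^ 2 / (4 * y))) * (2 * y / τ) ^ ν / y with hg
  have hfun : (fun t : ℝ => ((τ/2) * Real.exp t) * g ((τ/2) * Real.exp t))
      = fun t : ℝ => Real.exp (-τ * Real.cosh t) * Real.exp (ν * t) := by
    funext t
    have he : (0:ℝ) < Real.exp t := Real.exp_pos t
    have h1 : ((τ/2) * Real.exp t) + τ ^ 2 / (4 * ((τ/2) * Real.exp t)) = τ * Real.cosh t := by
      rw [Real.cosh_eq, Real.exp_neg]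
      field_simp
      ring
    have h2 : 2 * ((τ/2) * Real.exp t) / τ = Real.exp t := by field_simp
    have h3 : Real.exp t ^ ν = Real.exp (ν * t) := by rw [← Real.exp_mul, mul_comm]
    simp only [hg, h1, h2, h3]
    rw [show -τ * Real.cosh t = -(τ * Real.cosh t) by ring]
    field_simp
  have hg_eq : EqOn g
      (fun y : ℝ => (2/τ) ^ ν * (Real.exp (-(y + τ ^ 2 / (4 * y))) * y ^ (ν - 1))) (Ioi 0) := by
    intro y hy
    have hy' : (0:ℝ) < y := hy
    have hmul : (2 * y / τ) ^ ν = (2/τ) ^ ν * y ^ ν := by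
      rw [show 2 * y / τ = (2/τ) * y by ring, Real.mul_rpow (by positivity) hy'.le]
    have hsub : y ^ (ν - 1) = y ^ ν / y := by
      rw [Real.rpow_sub hy', Real.rpow_one]
    simp only [hg, hmul, hsub]
    ring
  have hgI : IntegrableOn g (Ioi (0:ℝ)) := by
    refine IntegrableOn.congr_fun ((integrable_psi hτ hν0).const_mul ((2/τ) ^ ν))
      (fun y hy => (hg_eq hy).symm) measurableSet_Ioi
  have hφint : Integrable (fun t : ℝ => Real.exp (-τ * Real.cosh t) * Real.exp (ν * t)) := by
    have h := (integrable_exp_scale_iff hc2 g).mp hgI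
    rwa [hfun] at h
  have hint1 : (∫ y in Ioi (0:ℝ), g y)
      = ∫ t : ℝ, Real.exp (-τ * Real.cosh t) * Real.exp (ν * t) := by
    rw [integral_exp_scale hc2 g]
    exact congrArg _ hfun
  have hφ2 : IntegrableOn
      (fun t : ℝ => Real.exp (-τ * Real.cosh t) * Real.exp (-(ν * t))) (Ioi (0:ℝ)) := by
    refine Integrable.mono' hφint.integrableOn
      (Continuous.aestronglyMeasurable (by continuity)) ?_
    refine (ae_restrict_iff' measurableSet_Ioi).mpr (ae_of_all _ fun t ht => ?_)
    have ht' : (0:ℝ) < t := ht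
    rw [Real.norm_eq_abs, abs_of_nonneg (by positivity)]
    refine mul_le_mul_of_nonneg_left (Real.exp_le_exp.mpr (by nlinarith)) (Real.exp_pos _).le
  have hrefl : (∫ t in Ioi (0:ℝ), Real.exp (-τ * Real.cosh t) * Real.exp (-(ν * t)))
      = ∫ t in Iic (0:ℝ), Real.exp (-τ * Real.cosh t) * Real.exp (ν * t) := by
    have h := integral_comp_neg_Ioi (0:ℝ)
      (fun t => Real.exp (-τ * Real.cosh t) * Real.exp (ν * t))
    simp only [Real.cosh_neg, mul_neg, neg_zero] at h
    exact h
  have hsplit : (∫ t in Ioi (0:ℝ), Real.exp (-τ * Real.cosh t) * Real.cosh (ν * t))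
      = (1/2) * ∫ t : ℝ, Real.exp (-τ * Real.cosh t) * Real.exp (ν * t) := by
    have hcosh : ∀ t ∈ Ioi (0:ℝ), Real.exp (-τ * Real.cosh t) * Real.cosh (ν * t)
        = (1/2) * (Real.exp (-τ * Real.cosh t) * Real.exp (ν * t))
          + (1/2) * (Real.exp (-τ * Real.cosh t) * Real.exp (-(ν * t))) := by
      intro t _
      rw [Real.cosh_eq (ν * t)]
      ring
    rw [setIntegral_congr_fun measurableSet_Ioi hcosh,
      integral_add ((hφint.integrableOn).const_mul _) (hφ2.const_mul _),
      MeasureTheory.integral_const_mul, MeasureTheory.integral_const_mul, hrefl,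
      ← intervalIntegral.integral_Iic_add_Ioi hφint.integrableOn hφint.integrableOn]
    ring
  have hgval : (∫ y in Ioi (0:ℝ), g y)
      = (2/τ) ^ ν * ∫ y in Ioi (0:ℝ), Real.exp (-(y + τ ^ 2 / (4 * y))) * y ^ (ν - 1) := by
    rw [setIntegral_congr_fun measurableSet_Ioi hg_eq, MeasureTheory.integral_const_mul]
  rw [hsplit, ← hint1, hgval, Real.div_rpow (by norm_num) hτ.le,
    Real.rpow_sub (by norm_num : (0:ℝ) < 2), Real.rpow_one, Real.rpow_neg hτ.le]
  ring

end BesselKAux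

/-- For `0 < ν < 1/2` and all `τ > 0`, `e^τ τ^ν K_ν(τ) ≤ 2^{ν-1} Γ(ν)`. -/
theorem besselK_exp_le (ν : ℝ) (hν0 : 0 < ν) (hν : ν < 1 / 2) (τ : ℝ) (hτ : 0 < τ) :
    Real.exp τ * τ ^ ν * besselK ν τ ≤ 2 ^ (ν - 1) * Real.Gamma ν := by
  open BesselKAux in
  have h12 : ((1:ℝ)/2 - 1) = -(1:ℝ)/2 := by norm_num
  -- notation
  set I : ℝ := ∫ y in Set.Ioi (0:ℝ), Real.exp (-(y + τ ^ 2 / (4 * y))) * y ^ (ν - 1) with hIdef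
  have hrep : besselK ν τ = (2:ℝ) ^ (ν - 1) * τ ^ (-ν) * I :=
    BesselKAux.besselK_rep hν0 hτ
  -- the key inequality : exp τ * I ≤ Γ ν
  have hkey : Real.exp τ * I ≤ Real.Gamma ν := by
    set c₀ : ℝ := (τ/4) ^ (ν - 1/2) with hc₀def
    have hc₀ : 0 < c₀ := by positivity
    set F : ℝ → ℝ := fun y => Real.exp (τ - (y + τ ^ 2 / (4 * y))) with hFdef
    have hFsplit : ∀ p : ℝ, (fun y : ℝ => F y * y ^ p)
        = fun y : ℝ => Real.exp τ * (Real.exp (-(y + τ ^ 2 / (4 * y))) * y ^ p) := by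
      intro p
      funext y
      simp only [hFdef, sub_eq_add_neg, Real.exp_add]
      ring
    -- integrability facts
    have hB : IntegrableOn (fun y : ℝ => Real.exp (-y) * y ^ (ν - 1)) (Set.Ioi (0:ℝ)) :=
      Real.GammaIntegral_convergent hν0
    have hC : IntegrableOn (fun y : ℝ => Real.exp (-y) * y ^ (-(1:ℝ)/2)) (Set.Ioi (0:ℝ)) := by
      have := Real.GammaIntegral_convergent (by norm_num : (0:ℝ) < 1/2)
      rwa [h12] at this
    have hpsiν := BesselKAux.integrable_psi hτ hν0
    have hpsiH : IntegrableOn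
        (fun y : ℝ => Real.exp (-(y + τ ^ 2 / (4 * y))) * y ^ (-(1:ℝ)/2)) (Set.Ioi (0:ℝ)) := by
      have := BesselKAux.integrable_psi hτ (by norm_num : (0:ℝ) < 1/2) (τ := τ)
      rwa [h12] at this
    have hFν : IntegrableOn (fun y : ℝ => F y * y ^ (ν - 1)) (Set.Ioi (0:ℝ)) := by
      rw [hFsplit]
      exact hpsiν.const_mul _
    have hFH : IntegrableOn (fun y : ℝ => F y * y ^ (-(1:ℝ)/2)) (Set.Ioi (0:ℝ)) := by
      rw [hFsplit]
      exact hpsiH.const_mul _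
    -- pointwise Chebyshev-type bound
    have hpt : ∀ y ∈ Set.Ioi (0:ℝ), F y * y ^ (ν - 1)
        ≤ c₀ * (F y * y ^ (-(1:ℝ)/2)) + Real.exp (-y) * y ^ (ν - 1)
          - c₀ * (Real.exp (-y) * y ^ (-(1:ℝ)/2)) := by
      intro y hy
      have hy' : (0:ℝ) < y := hy
      have hsplit : y ^ (ν - 1) = y ^ (ν - 1/2) * y ^ (-(1:ℝ)/2) := by
        rw [← Real.rpow_add hy']
        congr 1
        ring
      have hz : ν - 1/2 ≤ 0 := by linarith
      have hkey2 : (F y - Real.exp (-y)) * (y ^ (ν - 1/2) - c₀) ≤ 0 := by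
        rcases le_total y (τ/4) with h | h
        · refine mul_nonpos_iff.mpr (Or.inr ⟨?_, ?_⟩)
          · rw [sub_nonpos, hFdef]
            apply Real.exp_le_exp.mpr
            have hττ : τ ≤ τ ^ 2 / (4 * y) := by
              rw [le_div_iff₀ (by positivity)]
              nlinarith
            linarith
          · rw [sub_nonneg, hc₀def]
            exact Real.rpow_le_rpow_of_nonpos hy' h hz
        · refine mul_nonpos_iff.mpr (Or.inl ⟨?_, ?_⟩)
          · rw [sub_nonneg, hFdef]
            apply Real.exp_le_exp.mpr
            have hττ : τ ^ 2 / (4 * y) ≤ τ := by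
              rw [div_le_iff₀ (by positivity)]
              nlinarith
            linarith
          · rw [sub_nonpos, hc₀def]
            exact Real.rpow_le_rpow_of_nonpos (by positivity) h hz
      have h0 : (F y - Real.exp (-y)) * (y ^ (ν - 1/2) - c₀) * y ^ (-(1:ℝ)/2) ≤ 0 :=
        mul_nonpos_iff.mpr (Or.inr ⟨hkey2, Real.rpow_nonneg hy'.le _⟩)
      rw [hsplit]
      nlinarith [h0]
    -- integrate the pointwise bound
    have hRHSint : IntegrableOn (fun y : ℝ =>
        c₀ * (F y * y ^ (-(1:ℝ)/2)) + Real.exp (-y) * y ^ (ν - 1)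
          - c₀ * (Real.exp (-y) * y ^ (-(1:ℝ)/2))) (Set.Ioi (0:ℝ)) :=
      ((hFH.const_mul c₀).add hB).sub (hC.const_mul c₀)
    have hmono := setIntegral_mono_on hFν hRHSint measurableSet_Ioi hpt
    -- compute the right-hand side integral
    have hAval : (∫ y in Set.Ioi (0:ℝ), F y * y ^ (-(1:ℝ)/2)) = Real.sqrt π := by
      rw [hFsplit, MeasureTheory.integral_const_mul, BesselKAux.half_integral hτ,
        show Real.exp τ * (Real.sqrt π * Real.exp (-τ))
          = Real.sqrt π * (Real.exp τ * Real.exp (-τ)) from by ring,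
        ← Real.exp_add]
      simp
    have hBval : (∫ y in Set.Ioi (0:ℝ), Real.exp (-y) * y ^ (ν - 1)) = Real.Gamma ν :=
      (Real.Gamma_eq_integral hν0).symm
    have hCval : (∫ y in Set.Ioi (0:ℝ), Real.exp (-y) * y ^ (-(1:ℝ)/2)) = Real.sqrt π := by
      have := Real.Gamma_eq_integral (by norm_num : (0:ℝ) < 1/2)
      rw [h12, Real.Gamma_one_half_eq] at this
      exact this.symm
    have hRHSval : (∫ y in Set.Ioi (0:ℝ),
        (c₀ * (F y * y ^ (-(1:ℝ)/2)) + Real.exp (-y) * y ^ (ν - 1)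
          - c₀ * (Real.exp (-y) * y ^ (-(1:ℝ)/2)))) = Real.Gamma ν := by
      rw [integral_sub (show Integrable
          (fun y : ℝ => c₀ * (F y * y ^ (-(1:ℝ)/2)) + Real.exp (-y) * y ^ (ν - 1))
          (volume.restrict (Set.Ioi (0:ℝ))) from (hFH.const_mul c₀).add hB) (hC.const_mul c₀)]
      rw [integral_add (hFH.const_mul c₀) hB,
        MeasureTheory.integral_const_mul, MeasureTheory.integral_const_mul,
        hAval, hBval, hCval]
      ring
    have hEI : Real.exp τ * I = ∫ y in Set.Ioi (0:ℝ), F y * y ^ (ν - 1) := by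
      rw [hIdef, ← MeasureTheory.integral_const_mul, hFsplit]
    rw [hEI]
    calc (∫ y in Set.Ioi (0:ℝ), F y * y ^ (ν - 1))
        ≤ _ := hmono
      _ = Real.Gamma ν := hRHSval
  -- put everything together
  have hττ : τ ^ ν * τ ^ (-ν) = 1 := by
    rw [← Real.rpow_add hτ]
    simp
  have h2pos : (0:ℝ) < (2:ℝ) ^ (ν - 1) := by positivity
  calc Real.exp τ * τ ^ ν * besselK ν τ
      = (2:ℝ) ^ (ν - 1) * (τ ^ ν * τ ^ (-ν)) * (Real.exp τ * I) := by
        rw [hrep]; ring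
    _ = (2:ℝ) ^ (ν - 1) * (Real.exp τ * I) := by rw [hττ]; ring
    _ ≤ (2:ℝ) ^ (ν - 1) * Real.Gamma ν := by
        exact mul_le_mul_of_nonneg_left hkey h2pos.le
end
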